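/- Let G be a finite undirected graph, M a maximum matching, e = {u,v} ∈ M, and M' = M \ {e}. If P is an M'-augmenting path in G with one endpoint v and other endpoint w, then M' ⊕ P is a maximum matching of G whose set of covered vertices equals (vertices covered by M) \ {u} ∪ {w}. -/

import Mathlib

/-!
Deleting `s(u, v)` from `M` leaves a matching `M'` with one edge fewer that exposes `u` and `v`.
Flipping `M'` along an augmenting path `p` gains one edge: `p` has an even number of vertices,
so of its odd number of edges, which alternate starting and ending outside `M'`, one more lies
outside `M'` than inside. The flip covers exactly the vertices covered by `M'` together with the
two endpoints of `p`, because every inner vertex of `p` is already matched in `M'` by an edge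
of `p`. Since one endpoint is `v`, the result has `|M|` edges and covers
`(covered M \ {u}) ∪ {w}`.
-/

variable {V : Type*} [Fintype V] [DecidableEq V]

/-- A matching of `G` all of whose edges lie inside the vertex set `W`
(i.e. a matching of the induced subgraph `G[W]`). -/
def IsMatchingOn (G : SimpleGraph V) (W : Set V) (M : Finset (Sym2 V)) : Prop :=
  (∀ e ∈ M, e ∈ G.edgeSet) ∧ (∀ e ∈ M, ∀ v ∈ e, v ∈ W) ∧
  (M : Set (Sym2 V)).Pairwise fun e f => ∀ v, v ∈ e → v ∉ f

/-- Vertices covered by a set of edges. -/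
def mcovered (M : Finset (Sym2 V)) : Set V := {v | ∃ e ∈ M, v ∈ e}

/-- `w(G[W])`: maximum cardinality of a matching of `G[W]`. -/
noncomputable def mmax (G : SimpleGraph V) (W : Set V) : ℕ :=
  sSup {n | ∃ M, IsMatchingOn G W M ∧ M.card = n}

/-- `w^L(G[W])`: minimum number of `L`-vertices covered over maximum matchings of `G[W]`. -/
noncomputable def mwL (G : SimpleGraph V) (L W : Set V) : ℕ :=
  sInf {k | ∃ M, IsMatchingOn G W M ∧ M.card = mmax G W ∧ (mcovered M ∩ L).ncard = k}

/-- The edges of a path given by a vertex list. -/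
def pathEdges (p : List V) : Finset (Sym2 V) :=
  ((p.zip p.tail).map fun q => s(q.1, q.2)).toFinset

/-- An `M`-augmenting path inside `W`: endpoints `M`-unmatched, edges alternating
outside/inside `M`, starting and ending with a non-matching edge. -/
def IsAugPathOn (G : SimpleGraph V) (W : Set V) (M : Finset (Sym2 V)) (p : List V) : Prop :=
  2 ≤ p.length ∧ p.Nodup ∧ p.Chain' G.Adj ∧ (∀ v ∈ p, v ∈ W) ∧
  (∀ h : p ≠ [], p.head h ∉ mcovered M ∧ p.getLast h ∉ mcovered M) ∧
  ∀ i (h : i + 1 < p.length),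
    (s(p.get ⟨i, Nat.lt_of_succ_lt h⟩, p.get ⟨i + 1, h⟩) ∈ M ↔ i % 2 = 1)

section

variable {α : Type*}

theorem List.countP_eq_length_div_two_of_alternating (q : α → Bool) (l : List α)
    (h : ∀ i (hi : i < l.length), q l[i] = true ↔ i % 2 = 1) :
    l.countP q = l.length / 2 := by
  induction l generalizing q with
  | nil => simp
  | cons a l ih =>
    have ha : q a = false := by
      have := h 0 (by simp)
      rw [getElem_cons_zero] at this
      simpa using this
    have hl : countP (fun x => !q x) l = l.length / 2 := ih _ fun i hi => by
      have := h (i + 1) (by simpa using hi)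
      rw [getElem_cons_succ] at this
      simp only [Bool.not_eq_eq_eq_not, Bool.not_true, Nat.succ_mod_two_eq_one_iff] at this ⊢
      rw [← Bool.not_eq_true, this]
      omega
    have hsplit : l.length = countP q l + countP (fun x => !q x) l := by
      simpa using l.length_eq_countP_add_countP q
    simp only [countP_cons, ha, length_cons, Bool.false_eq_true, if_false, add_zero]
    omega

theorem Finset.card_symmDiff_add_two_mul_card_inter [DecidableEq α] (s t : Finset α) :
    (symmDiff s t).card + 2 * (s ∩ t).card = s.card + t.card := by
  rw [symmDiff_def, sup_eq_union, card_union_of_disjoint disjoint_sdiff_sdiff]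
  have := card_sdiff_add_card_inter s t
  have := card_sdiff_add_card_inter t s
  rw [inter_comm t s] at this
  omega

theorem List.getElem_mem_sym2_of_eq_or_eq_succ (l : List α) {i j : ℕ} (hj : j + 1 < l.length)
    (hij : i = j ∨ i = j + 1) :
    l[i]'(by omega) ∈ s(l[j], l[j + 1]) := by
  rcases hij with rfl | rfl
  · exact Sym2.mem_mk_left _ _
  · exact Sym2.mem_mk_right _ _

theorem List.Nodup.le_succ_of_mem_sym2 {l : List α} (hl : l.Nodup) {i j : ℕ}
    (hi : i + 1 < l.length) (hj : j + 1 < l.length) {x : α}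
    (hxi : x ∈ s(l[i], l[i + 1])) (hxj : x ∈ s(l[j], l[j + 1])) : i ≤ j + 1 := by
  rw [Sym2.mem_iff] at hxi hxj
  rcases hxi with rfl | rfl <;> rcases hxj with h | h <;> have := hl.getElem_inj_iff.mp h <;> omega

theorem List.Nodup.eq_of_sym2_eq {l : List α} (hl : l.Nodup) {i j : ℕ}
    (hi : i + 1 < l.length) (hj : j + 1 < l.length)
    (h : s(l[i], l[i + 1]) = s(l[j], l[j + 1])) : i = j := by
  rcases Sym2.eq_iff.mp h with ⟨h₁, -⟩ | ⟨h₁, h₂⟩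
  · exact hl.getElem_inj_iff.mp h₁
  · have := hl.getElem_inj_iff.mp h₁
    have := hl.getElem_inj_iff.mp h₂
    omega

def pathEdgeList (p : List α) : List (Sym2 α) :=
  (p.zip p.tail).map fun q => s(q.1, q.2)

@[simp]
theorem length_pathEdgeList (p : List α) : (pathEdgeList p).length = p.length - 1 := by
  simp [pathEdgeList]

theorem getElem_pathEdgeList (p : List α) {i : ℕ} (hi : i < (pathEdgeList p).length) :
    (pathEdgeList p)[i] = s(p[i]'(by simp at hi; omega), p[i + 1]'(by simp at hi; omega)) := by
  simp [pathEdgeList, List.getElem_tail]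

theorem nodup_pathEdgeList {p : List α} (hp : p.Nodup) : (pathEdgeList p).Nodup := by
  rw [List.nodup_iff_injective_getElem]
  rintro ⟨i, hi⟩ ⟨j, hj⟩ hij
  simp only [getElem_pathEdgeList] at hij
  exact Fin.ext (hp.eq_of_sym2_eq _ _ hij)

variable [DecidableEq α]

theorem pathEdges_eq_toFinset (p : List α) : pathEdges p = (pathEdgeList p).toFinset := rfl

theorem mem_pathEdges {p : List α} {e : Sym2 α} :
    e ∈ pathEdges p ↔ ∃ i, ∃ hi : i + 1 < p.length, s(p[i], p[i + 1]) = e := by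
  rw [pathEdges_eq_toFinset, List.mem_toFinset, List.mem_iff_getElem]
  constructor
  · rintro ⟨i, hi, rfl⟩
    exact ⟨i, by simp at hi; omega, (getElem_pathEdgeList p hi).symm⟩
  · rintro ⟨i, hi, rfl⟩
    exact ⟨i, by simp; omega, getElem_pathEdgeList p _⟩

theorem mem_of_mem_pathEdges {p : List α} {e : Sym2 α} {x : α} (he : e ∈ pathEdges p)
    (hx : x ∈ e) : x ∈ p := by
  obtain ⟨i, hi, rfl⟩ := mem_pathEdges.mp he
  rcases Sym2.mem_iff.mp hx with rfl | rfl <;> apply List.getElem_mem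

theorem card_pathEdges {p : List α} (hp : p.Nodup) : (pathEdges p).card = p.length - 1 := by
  rw [pathEdges_eq_toFinset, List.toFinset_card_of_nodup (nodup_pathEdgeList hp),
    length_pathEdgeList]

end

section

variable {α : Type*} {G : SimpleGraph α} {W : Set α} {M N : Finset (Sym2 α)} {p : List α}

namespace IsMatchingOn

theorem eq_of_mem_of_mem (hM : IsMatchingOn G W M) {e f : Sym2 α} (he : e ∈ M) (hf : f ∈ M)
    {x : α} (hxe : x ∈ e) (hxf : x ∈ f) : e = f := by
  by_contra hne
  exact hM.2.2 he hf hne x hxe hxf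

theorem subset (hM : IsMatchingOn G W M) (hNM : N ⊆ M) : IsMatchingOn G W N :=
  ⟨fun e he => hM.1 e (hNM he), fun e he => hM.2.1 e (hNM he),
    hM.2.2.mono (Finset.coe_subset.mpr hNM)⟩

theorem mcovered_erase [DecidableEq α] (hM : IsMatchingOn G W M) {u v : α} (huv : s(u, v) ∈ M) :
    mcovered (M.erase s(u, v)) = mcovered M \ {u, v} := by
  ext x
  simp only [mcovered, Finset.mem_erase, Set.mem_sdiff, Set.mem_ofPred_eq, Set.mem_insert_iff,
    Set.mem_singleton_iff, not_or]
  constructor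
  · rintro ⟨e, ⟨hne, he⟩, hx⟩
    refine ⟨⟨e, he, hx⟩, ?_, ?_⟩ <;> rintro rfl
    · exact hne (hM.eq_of_mem_of_mem he huv hx (Sym2.mem_mk_left _ _))
    · exact hne (hM.eq_of_mem_of_mem he huv hx (Sym2.mem_mk_right _ _))
  · rintro ⟨⟨e, he, hx⟩, hxu, hxv⟩
    refine ⟨e, ⟨?_, he⟩, hx⟩
    rintro rfl
    rcases Sym2.mem_iff.mp hx with rfl | rfl <;> contradiction

end IsMatchingOn

namespace IsAugPathOn

theorem two_le_length (hp : IsAugPathOn G W M p) : 2 ≤ p.length := hp.1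

theorem nodup (hp : IsAugPathOn G W M p) : p.Nodup := hp.2.1

theorem mem_iff (hp : IsAugPathOn G W M p) {i : ℕ} (hi : i + 1 < p.length) :
    s(p[i], p[i + 1]) ∈ M ↔ i % 2 = 1 := by
  simpa using hp.2.2.2.2.2 i hi

theorem getElem_notMem_mcovered (hp : IsAugPathOn G W M p) {i : ℕ} (hi : i < p.length)
    (hend : i = 0 ∨ i = p.length - 1) :
    p[i] ∉ mcovered M := by
  have hne : p ≠ [] := List.ne_nil_of_length_pos (by omega)
  obtain ⟨hhead, hlast⟩ := hp.2.2.2.2.1 hne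
  rcases hend with rfl | rfl
  · rwa [List.head_eq_getElem_zero] at hhead
  · rwa [List.getLast_eq_getElem] at hlast

theorem length_mod_two (hp : IsAugPathOn G W M p) : p.length % 2 = 0 := by
  have := hp.two_le_length
  by_contra hodd
  have hlast := (hp.mem_iff (i := p.length - 2) (by omega)).mpr (by omega)
  refine hp.getElem_notMem_mcovered (i := p.length - 1) (by omega) (Or.inr rfl) ⟨_, hlast, ?_⟩
  exact p.getElem_mem_sym2_of_eq_or_eq_succ _ (Or.inr (by omega))

theorem exists_mem_sym2_of_mem (hp : IsAugPathOn G W M p) {i : ℕ} (h0 : 0 < i)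
    (hi : i < p.length - 1) :
    ∃ j, ∃ hj : j + 1 < p.length, s(p[j], p[j + 1]) ∈ M ∧ p[i] ∈ s(p[j], p[j + 1]) := by
  by_cases hodd : i % 2 = 1
  · exact ⟨i, by omega, (hp.mem_iff _).mpr hodd,
      p.getElem_mem_sym2_of_eq_or_eq_succ _ (Or.inl rfl)⟩
  · exact ⟨i - 1, by omega, (hp.mem_iff _).mpr (by omega),
      p.getElem_mem_sym2_of_eq_or_eq_succ _ (Or.inr (by omega))⟩

theorem exists_mem_sym2_of_notMem (hp : IsAugPathOn G W M p) {i : ℕ} (hi : i < p.length) :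
    ∃ j, ∃ hj : j + 1 < p.length, s(p[j], p[j + 1]) ∉ M ∧ p[i] ∈ s(p[j], p[j + 1]) := by
  have := hp.length_mod_two
  by_cases hodd : i % 2 = 1
  · exact ⟨i - 1, by omega, fun h => absurd ((hp.mem_iff _).mp h) (by omega),
      p.getElem_mem_sym2_of_eq_or_eq_succ _ (Or.inr (by omega))⟩
  · exact ⟨i, by omega, fun h => hodd ((hp.mem_iff _).mp h),
      p.getElem_mem_sym2_of_eq_or_eq_succ _ (Or.inl rfl)⟩

variable [DecidableEq α]

theorem mem_pathEdges_of_mem (hp : IsAugPathOn G W M p) (hM : IsMatchingOn G W M)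
    {e : Sym2 α} (he : e ∈ M) {x : α} (hxe : x ∈ e) (hxp : x ∈ p) : e ∈ pathEdges p := by
  obtain ⟨i, hi, rfl⟩ := List.mem_iff_getElem.mp hxp
  have hint : 0 < i ∧ i < p.length - 1 := by
    by_contra hend
    exact hp.getElem_notMem_mcovered hi (by omega) ⟨e, he, hxe⟩
  obtain ⟨j, hj, hjM, hij⟩ := hp.exists_mem_sym2_of_mem hint.1 hint.2
  rw [hM.eq_of_mem_of_mem he hjM hxe hij]
  exact mem_pathEdges.mpr ⟨j, hj, rfl⟩

theorem eq_of_mem_pathEdges_of_notMem (hp : IsAugPathOn G W M p) {e f : Sym2 α}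
    (heP : e ∈ pathEdges p) (heM : e ∉ M) (hfP : f ∈ pathEdges p) (hfM : f ∉ M)
    {x : α} (hxe : x ∈ e) (hxf : x ∈ f) : e = f := by
  obtain ⟨i, hi, rfl⟩ := mem_pathEdges.mp heP
  obtain ⟨j, hj, rfl⟩ := mem_pathEdges.mp hfP
  rw [hp.mem_iff] at heM hfM
  have hij := hp.nodup.le_succ_of_mem_sym2 hi hj hxe hxf
  have hji := hp.nodup.le_succ_of_mem_sym2 hj hi hxf hxe
  obtain rfl : i = j := by omega
  rfl

theorem isMatchingOn_symmDiff (hp : IsAugPathOn G W M p) (hM : IsMatchingOn G W M) :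
    IsMatchingOn G W (symmDiff M (pathEdges p)) := by
  refine ⟨fun e he => ?_, fun e he x hx => ?_, fun e he f hf hne x hxe hxf => ?_⟩
  · rcases Finset.mem_symmDiff.mp he with ⟨heM, -⟩ | ⟨heP, -⟩
    · exact hM.1 e heM
    · obtain ⟨i, hi, rfl⟩ := mem_pathEdges.mp heP
      exact List.isChain_iff_getElem.mp hp.2.2.1 i hi
  · rcases Finset.mem_symmDiff.mp he with ⟨heM, -⟩ | ⟨heP, -⟩
    · exact hM.2.1 e heM x hx
    · exact hp.2.2.2.1 x (mem_of_mem_pathEdges heP hx)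
  rw [Finset.mem_coe, Finset.mem_symmDiff] at he hf
  rcases he with ⟨heM, heP⟩ | ⟨heP, heM⟩ <;> rcases hf with ⟨hfM, hfP⟩ | ⟨hfP, hfM⟩
  · exact hne (hM.eq_of_mem_of_mem heM hfM hxe hxf)
  · exact heP (hp.mem_pathEdges_of_mem hM heM hxe (mem_of_mem_pathEdges hfP hxf))
  · exact hfP (hp.mem_pathEdges_of_mem hM hfM hxf (mem_of_mem_pathEdges heP hxe))
  · exact hne (hp.eq_of_mem_pathEdges_of_notMem heP heM hfP hfM hxe hxf)

theorem mem_mcovered_symmDiff_of_mem (hp : IsAugPathOn G W M p) {x : α} (hx : x ∈ p) :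
    x ∈ mcovered (symmDiff M (pathEdges p)) := by
  obtain ⟨i, hi, rfl⟩ := List.mem_iff_getElem.mp hx
  obtain ⟨j, hj, hjM, hij⟩ := hp.exists_mem_sym2_of_notMem hi
  exact ⟨_, Finset.mem_symmDiff.mpr (Or.inr ⟨mem_pathEdges.mpr ⟨j, hj, rfl⟩, hjM⟩), hij⟩

theorem mcovered_symmDiff (hp : IsAugPathOn G W M p) (h : p ≠ []) :
    mcovered (symmDiff M (pathEdges p)) = mcovered M ∪ {p.head h, p.getLast h} := by
  apply Set.Subset.antisymm
  · rintro x ⟨e, he, hxe⟩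
    rcases Finset.mem_symmDiff.mp he with ⟨heM, -⟩ | ⟨heP, -⟩
    · exact Or.inl ⟨e, heM, hxe⟩
    obtain ⟨i, hi, rfl⟩ := List.mem_iff_getElem.mp (mem_of_mem_pathEdges heP hxe)
    rw [List.head_eq_getElem_zero, List.getLast_eq_getElem]
    by_cases hend : i = 0 ∨ i = p.length - 1
    · rcases hend with rfl | rfl
      · exact Or.inr (Or.inl rfl)
      · exact Or.inr (Or.inr rfl)
    obtain ⟨j, hj, hjM, hij⟩ := hp.exists_mem_sym2_of_mem (i := i) (by omega) (by omega)
    exact Or.inl ⟨_, hjM, hij⟩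
  · rintro x (⟨e, heM, hxe⟩ | rfl | rfl)
    · by_cases heP : e ∈ pathEdges p
      · exact hp.mem_mcovered_symmDiff_of_mem (mem_of_mem_pathEdges heP hxe)
      · exact ⟨e, Finset.mem_symmDiff.mpr (Or.inl ⟨heM, heP⟩), hxe⟩
    · exact hp.mem_mcovered_symmDiff_of_mem (List.head_mem h)
    · exact hp.mem_mcovered_symmDiff_of_mem (List.getLast_mem h)

theorem card_inter_pathEdges (hp : IsAugPathOn G W M p) :
    (M ∩ pathEdges p).card = (p.length - 1) / 2 := by
  have hL := (pathEdgeList p).countP_eq_length_div_two_of_alternating (fun e => decide (e ∈ M))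
    fun i hi => by
      rw [getElem_pathEdgeList, decide_eq_true_iff]
      exact hp.mem_iff _
  have hfilter :
      M ∩ pathEdges p = ((pathEdgeList p).filter fun e => decide (e ∈ M)).toFinset := by
    ext e
    simp [pathEdges_eq_toFinset, and_comm]
  rw [hfilter, List.toFinset_card_of_nodup ((nodup_pathEdgeList hp.nodup).filter _),
    ← List.countP_eq_length_filter, hL, length_pathEdgeList]

theorem card_symmDiff (hp : IsAugPathOn G W M p) :
    (symmDiff M (pathEdges p)).card = M.card + 1 := by
  have := M.card_symmDiff_add_two_mul_card_inter (pathEdges p)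
  rw [hp.card_inter_pathEdges, card_pathEdges hp.nodup] at this
  have := hp.length_mod_two
  have := hp.two_le_length
  omega

end IsAugPathOn

end

/-- if `M` is a maximum matching, `e = {u,v} ∈ M`, `M' = M \ {e}`, and `p`
is an `M'`-augmenting path with endpoints `v` and `w`, then `M' ⊕ p` is a maximum
matching covering exactly `(covered M \ {u}) ∪ {w}`. -/
theorem stmt16 (G : SimpleGraph V) (M : Finset (Sym2 V))
    (hM : IsMatchingOn G Set.univ M) (hmax : M.card = mmax G Set.univ)
    (u v : V) (huv : s(u, v) ∈ M)
    (p : List V) (hp : IsAugPathOn G Set.univ (M.erase s(u, v)) p)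
    (h : p ≠ []) (hv : p.head h = v) :
    IsMatchingOn G Set.univ (symmDiff (M.erase s(u, v)) (pathEdges p)) ∧
    (symmDiff (M.erase s(u, v)) (pathEdges p)).card = mmax G Set.univ ∧
    mcovered (symmDiff (M.erase s(u, v)) (pathEdges p)) =
      (mcovered M \ {u}) ∪ {p.getLast h} := by
  refine ⟨hp.isMatchingOn_symmDiff (hM.subset (M.erase_subset _)), ?_, ?_⟩
  · rw [hp.card_symmDiff, Finset.card_erase_add_one huv, hmax]
  · have huv_ne : u ≠ v := (hM.1 _ huv).ne
    have hv_mem : v ∈ mcovered M := ⟨_, huv, Sym2.mem_mk_right u v⟩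
    rw [hp.mcovered_symmDiff h, hM.mcovered_erase huv, hv]
    ext x
    simp only [Set.mem_union, Set.mem_sdiff, Set.mem_insert_iff, Set.mem_singleton_iff]
    grind
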